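/- arXiv:1602.01070 — 2 statements merged into one kernel-verified Lean document; each statement's English description precedes it below -/
import Mathlib

section
/- The convex conjugate V is strictly decreasing, strictly convex and continuously differentiable on (0,∞); its derivative satisfies V'(y) = −I(y) for every y > 0; and lim_{y→0+} V(y) = lim_{x→∞} U(x) (in (0,∞]) while lim_{y→∞} V(y) = lim_{x→0+} U(x) (in [−∞,∞)). -/
open Filter Set Topology

/-!
Young's inequality `U x - x * y ≤ V y` is an equality exactly at `x = I y`, since the tangent
line of the strictly concave `U` at `I y` has slope `y`; hence `V y = U (I y) - I y * y`.
Consequently `-I z` is a subgradient of `V` at every `z`. As a strictly decreasing bijection of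
`(0, ∞)`, `I` is continuous, so this subgradient is unique and `V' = -I`; monotonicity and strict
convexity of `V` follow from `-I < 0` being strictly increasing. The limit at `0+` comes from
`U x - x * y ≤ V y ≤ U (I y)`, and the one at `∞` from `I y → 0` together with the lower bound
`2 U (I y / 2) - U (I y) ≤ V y` (Young at `I y / 2` plus the tangent line at `I y`).
-/

theorem StrictConcaveOn.lt_add_mul_sub_of_hasDerivAt {S : Set ℝ} {f : ℝ → ℝ} {f' x z : ℝ}
    (hf : StrictConcaveOn ℝ S f) (hx : x ∈ S) (hz : z ∈ S) (hzx : z ≠ x)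
    (hd : HasDerivAt f f' x) : f z < f x + f' * (z - x) := by
  rcases hzx.lt_or_gt with hlt | hgt
  · have h := hf.lt_slope_of_hasDerivAt hz hx hlt hd
    rw [slope_def_field, lt_div_iff₀ (sub_pos.2 hlt)] at h
    linarith
  · have h := hf.slope_lt_of_hasDerivAt hx hz hgt hd
    rw [slope_def_field, div_lt_iff₀ (sub_pos.2 hgt)] at h
    linarith

theorem StrictConcaveOn.strictAntiOn_of_hasDerivAt {S : Set ℝ} {f f' : ℝ → ℝ}
    (hf : StrictConcaveOn ℝ S f) (hd : ∀ x ∈ S, HasDerivAt f (f' x) x) : StrictAntiOn f' S :=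
  (hf.strictAntiOn_deriv fun x hx => (hd x hx).differentiableAt).congr fun x hx => (hd x hx).deriv

theorem StrictMonoOn.strictConvexOn_of_hasDerivAt {S : Set ℝ} {f f' : ℝ → ℝ}
    (hf' : StrictMonoOn f' S) (hS : IsOpen S) (hconv : Convex ℝ S)
    (hd : ∀ x ∈ S, HasDerivAt f (f' x) x) : StrictConvexOn ℝ S f :=
  StrictMonoOn.strictConvexOn_of_deriv hconv
    (fun x hx => (hd x hx).continuousAt.continuousWithinAt)
    (by rw [hS.interior_eq]; exact hf'.congr fun x hx => (hd x hx).deriv.symm)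

theorem StrictConcaveOn.pos_of_hasDerivAt_of_monotoneOn {S : Set ℝ} {f : ℝ → ℝ} {f' x z : ℝ}
    (hf : StrictConcaveOn ℝ S f) (hmono : MonotoneOn f S) (hx : x ∈ S) (hz : z ∈ S)
    (hxz : x < z) (hd : HasDerivAt f f' x) : 0 < f' :=
  (hmono.slope_nonneg hx hz).trans_lt (hf.slope_lt_of_hasDerivAt hx hz hxz hd)

theorem StrictAntiOn.strictAntiOn_of_leftInvOn {g I : ℝ → ℝ} {s t : Set ℝ}
    (hg : StrictAntiOn g s) (hI : MapsTo I t s) (hgI : LeftInvOn g I t) : StrictAntiOn I t := by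
  intro a ha b hb hab
  by_contra! hle
  have := hg.antitoneOn (hI ha) (hI hb) hle
  rw [hgI ha, hgI hb] at this
  exact hab.not_ge this

theorem StrictAntiOn.continuousOn_Ioi_of_surjOn {f : ℝ → ℝ} {a b : ℝ}
    (hf : StrictAntiOn f (Ioi a)) (hmaps : MapsTo f (Ioi a) (Ioi b))
    (hsurj : SurjOn f (Ioi a) (Ioi b)) : ContinuousOn f (Ioi a) := by
  intro y hy
  have himage : f '' Ioi a ∈ 𝓝 (f y) := mem_of_superset (Ioi_mem_nhds (hmaps hy)) hsurj
  exact (StrictMonoOn.continuousAt_of_image_mem_nhds (β := ℝᵒᵈ) hf (Ioi_mem_nhds hy)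
    himage).continuousWithinAt

theorem StrictAntiOn.tendsto_atTop_nhdsGT_of_surjOn {f : ℝ → ℝ} {a b : ℝ}
    (hf : StrictAntiOn f (Ioi a)) (hmaps : MapsTo f (Ioi a) (Ioi b))
    (hsurj : SurjOn f (Ioi a) (Ioi b)) : Tendsto f atTop (𝓝[>] b) := by
  refine tendsto_nhdsWithin_iff.2 ⟨tendsto_order.2 ⟨fun c hc => ?_, fun c hc => ?_⟩, ?_⟩
  · filter_upwards [eventually_gt_atTop a] with y hy
    exact hc.trans (hmaps hy)
  · obtain ⟨x, hx, rfl⟩ := hsurj hc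
    filter_upwards [eventually_gt_atTop x] with y hy
    exact hf hx (hx.trans hy) hy
  · filter_upwards [eventually_gt_atTop a] with y hy
    exact hmaps hy

theorem hasDerivAt_of_subgradient_of_continuousAt {f g : ℝ → ℝ} {s : Set ℝ} {y : ℝ}
    (hs : s ∈ 𝓝 y) (hsub : ∀ z ∈ s, ∀ w ∈ s, f z + g z * (w - z) ≤ f w)
    (hg : ContinuousAt g y) : HasDerivAt f (g y) y := by
  rw [hasDerivAt_iff_isLittleO]
  have hg0 : (fun z => g z - g y) =o[𝓝 y] fun _ => (1 : ℝ) :=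
    (Asymptotics.isLittleO_one_iff ℝ).2 (by simpa using hg.tendsto.sub_const (g y))
  have hsmall : (fun z => (g z - g y) * (z - y)) =o[𝓝 y] fun z => z - y := by
    simpa using hg0.mul_isBigO (Asymptotics.isBigO_refl (fun z => z - y) (𝓝 y))
  refine (Asymptotics.IsBigO.of_bound 1 ?_).trans_isLittleO hsmall
  filter_upwards [hs] with z hz
  have h1 := hsub y (mem_of_mem_nhds hs) z hz
  have h2 := hsub z hz y (mem_of_mem_nhds hs)
  rw [one_mul, Real.norm_eq_abs, Real.norm_eq_abs, smul_eq_mul]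
  -- `h1`, `h2` squeeze the remainder: `0 ≤ f z - f y - (z - y) * g y ≤ (g z - g y) * (z - y)`
  exact abs_le_abs (by linarith) (by linarith)

theorem MonotoneOn.tendsto_atTop_sSup_image {α β : Type*} [LinearOrder α] [NoMaxOrder α]
    [CompleteLinearOrder β] [TopologicalSpace β] [OrderTopology β] {f : α → β} {a : α}
    (hf : MonotoneOn f (Ioi a)) : Tendsto f atTop (𝓝 (sSup (f '' Ioi a))) := by
  refine tendsto_order.2 ⟨fun b hb => ?_, fun b hb => ?_⟩
  · obtain ⟨_, ⟨x, hx, rfl⟩, hbx⟩ := lt_sSup_iff.1 hb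
    filter_upwards [eventually_ge_atTop x] with z hz
    exact hbx.trans_le (hf hx (lt_of_lt_of_le hx hz) hz)
  · filter_upwards [eventually_gt_atTop a] with z hz
    exact (le_sSup (mem_image_of_mem f hz)).trans_lt hb

section ConvexConjugate

variable {U U' V I : ℝ → ℝ}

theorem conjugate_eq (hU_conc : StrictConcaveOn ℝ (Ioi 0) U)
    (hU_deriv : ∀ x ∈ Ioi (0 : ℝ), HasDerivAt U (U' x) x)
    (hV : ∀ y > 0, IsLUB {z : ℝ | ∃ x > 0, z = U x - x * y} (V y))
    (hI_pos : ∀ y > 0, 0 < I y) (hI_left : ∀ y > 0, U' (I y) = y) {y : ℝ} (hy : 0 < y) :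
    V y = U (I y) - I y * y := by
  refine (hV y hy).unique (IsGreatest.isLUB ⟨⟨I y, hI_pos y hy, rfl⟩, ?_⟩)
  rintro _ ⟨x, hx, rfl⟩
  rcases eq_or_ne x (I y) with rfl | hne
  · rfl
  · have h := hU_conc.lt_add_mul_sub_of_hasDerivAt (hI_pos y hy) hx hne (hU_deriv _ (hI_pos y hy))
    rw [hI_left y hy] at h
    linarith

theorem conjugate_le_apply_inverse (hVeq : ∀ y > 0, V y = U (I y) - I y * y)
    (hI_pos : ∀ y > 0, 0 < I y) {y : ℝ} (hy : 0 < y) : V y ≤ U (I y) := by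
  rw [hVeq y hy]
  linarith [mul_pos (hI_pos y hy) hy]

theorem conjugate_subgradient (hV : ∀ y > 0, IsLUB {z : ℝ | ∃ x > 0, z = U x - x * y} (V y))
    (hVeq : ∀ y > 0, V y = U (I y) - I y * y) (hI_pos : ∀ y > 0, 0 < I y) :
    ∀ z ∈ Ioi (0 : ℝ), ∀ w ∈ Ioi (0 : ℝ), V z + -I z * (w - z) ≤ V w := by
  intro z hz w hw
  have h := (hV w hw).1 ⟨I z, hI_pos z hz, rfl⟩
  rw [hVeq z hz]
  linarith

theorem two_mul_apply_half_sub_le_conjugate (hU_conc : StrictConcaveOn ℝ (Ioi 0) U)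
    (hU_deriv : ∀ x ∈ Ioi (0 : ℝ), HasDerivAt U (U' x) x)
    (hV : ∀ y > 0, IsLUB {z : ℝ | ∃ x > 0, z = U x - x * y} (V y))
    (hI_pos : ∀ y > 0, 0 < I y) (hI_left : ∀ y > 0, U' (I y) = y) {y : ℝ} (hy : 0 < y) :
    2 * U (I y / 2) - U (I y) ≤ V y := by
  have hx := hI_pos y hy
  have hyoung := (hV y hy).1 ⟨I y / 2, half_pos hx, rfl⟩
  have htangent := hU_conc.lt_add_mul_sub_of_hasDerivAt hx (half_pos hx) (by linarith)
    (hU_deriv _ hx)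
  rw [hI_left y hy] at htangent
  linarith

theorem tendsto_conjugate_nhdsGT_zero
    (hV : ∀ y > 0, IsLUB {z : ℝ | ∃ x > 0, z = U x - x * y} (V y))
    (hVeq : ∀ y > 0, V y = U (I y) - I y * y) (hI_pos : ∀ y > 0, 0 < I y) :
    Tendsto (fun y => (V y : EReal)) (𝓝[>] 0)
      (𝓝 (sSup ((fun x => (U x : EReal)) '' Ioi 0))) := by
  refine tendsto_order.2 ⟨fun b hb => ?_, fun b hb => ?_⟩
  · obtain ⟨_, ⟨x, hx, rfl⟩, hbx⟩ := lt_sSup_iff.1 hb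
    have hlim : Tendsto (fun y => ((U x - x * y : ℝ) : EReal)) (𝓝[>] 0) (𝓝 (U x)) :=
      tendsto_nhdsWithin_of_tendsto_nhds <| EReal.tendsto_coe.2 <| by
        simpa using (tendsto_const_nhds (x := U x)).sub ((continuous_const_mul x).tendsto 0)
    filter_upwards [hlim.eventually_const_lt hbx, self_mem_nhdsWithin] with y hby hy
    exact hby.trans_le (EReal.coe_le_coe_iff.2 ((hV y hy).1 ⟨x, hx, rfl⟩))
  · filter_upwards [self_mem_nhdsWithin] with y hy
    exact ((EReal.coe_le_coe_iff.2 (conjugate_le_apply_inverse hVeq hI_pos hy)).trans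
      (le_sSup (mem_image_of_mem (fun x => (U x : EReal)) (hI_pos y hy)))).trans_lt hb

theorem tendsto_conjugate_atTop (hU_mono : MonotoneOn U (Ioi 0))
    (hU_conc : StrictConcaveOn ℝ (Ioi 0) U)
    (hU_deriv : ∀ x ∈ Ioi (0 : ℝ), HasDerivAt U (U' x) x)
    (hV : ∀ y > 0, IsLUB {z : ℝ | ∃ x > 0, z = U x - x * y} (V y))
    (hVeq : ∀ y > 0, V y = U (I y) - I y * y)
    (hI_pos : ∀ y > 0, 0 < I y) (hI_left : ∀ y > 0, U' (I y) = y)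
    (hI : Tendsto I atTop (𝓝[>] 0)) :
    Tendsto (fun y => (V y : EReal)) atTop (𝓝 (sInf ((fun x => (U x : EReal)) '' Ioi 0))) := by
  have hUe : MonotoneOn (fun x => (U x : EReal)) (Ioi 0) :=
    EReal.coe_strictMono.monotone.comp_monotoneOn hU_mono
  have hinf_le : ∀ x ∈ Ioi (0 : ℝ), sInf ((fun x => (U x : EReal)) '' Ioi 0) ≤ U x :=
    fun x hx => sInf_le (mem_image_of_mem _ hx)
  have hUlim := hUe.tendsto_nhdsGT (OrderBot.bddBelow _)
  have hupper : ∀ᶠ y in atTop, (V y : EReal) ≤ U (I y) := by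
    filter_upwards [eventually_gt_atTop 0] with y hy
    exact EReal.coe_le_coe_iff.2 (conjugate_le_apply_inverse hVeq hI_pos hy)
  generalize sInf ((fun x => (U x : EReal)) '' Ioi 0) = M at hinf_le hUlim ⊢
  induction M using EReal.rec with
  | bot => exact tendsto_nhds_bot_mono (hUlim.comp hI) hupper
  | coe m =>
    have hUm : Tendsto (fun y => U (I y)) atTop (𝓝 m) := EReal.tendsto_coe.1 (hUlim.comp hI)
    refine EReal.tendsto_coe.2 (tendsto_of_tendsto_of_tendsto_of_le_of_le'
      (g := fun y => 2 * m - U (I y)) (by simpa [two_mul] using hUm.const_sub (2 * m)) hUm ?_ ?_)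
    · filter_upwards [eventually_gt_atTop 0] with y hy
      have hm := EReal.coe_le_coe_iff.1 (hinf_le _ (half_pos (hI_pos y hy)))
      linarith [two_mul_apply_half_sub_le_conjugate hU_conc hU_deriv hV hI_pos hI_left hy]
    · filter_upwards [eventually_gt_atTop 0] with y hy
      exact conjugate_le_apply_inverse hVeq hI_pos hy
  | top => exact absurd (hinf_le 1 (by norm_num)) (by simp)

end ConvexConjugate

theorem convex_conjugate_properties_general
    (U U' V I : ℝ → ℝ)
    (hU_incr : StrictMonoOn U (Set.Ioi 0))
    (hU_conc : StrictConcaveOn ℝ (Set.Ioi 0) U)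
    (hU_deriv : ∀ x ∈ Set.Ioi (0:ℝ), HasDerivAt U (U' x) x)
    (hU_pos : ∃ x > 0, 0 < U x)
    (hV : ∀ y > 0, IsLUB {z : ℝ | ∃ x > 0, z = U x - x * y} (V y))
    (hI_pos : ∀ y > 0, 0 < I y)
    (hI_left : ∀ y > 0, U' (I y) = y)
    (hI_right : ∀ x > 0, I (U' x) = x) :
    StrictAntiOn V (Set.Ioi 0) ∧
    StrictConvexOn ℝ (Set.Ioi 0) V ∧
    (∀ y ∈ Set.Ioi (0:ℝ), HasDerivAt V (-(I y)) y) ∧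
    ContinuousOn (fun y => -(I y)) (Set.Ioi 0) ∧
    (∃ L : EReal, 0 < L ∧
      Filter.Tendsto (fun x => (U x : EReal)) Filter.atTop (nhds L) ∧
      Filter.Tendsto (fun y => (V y : EReal)) (nhdsWithin 0 (Set.Ioi 0)) (nhds L)) ∧
    (∃ M : EReal, M < ⊤ ∧
      Filter.Tendsto (fun x => (U x : EReal)) (nhdsWithin 0 (Set.Ioi 0)) (nhds M) ∧
      Filter.Tendsto (fun y => (V y : EReal)) Filter.atTop (nhds M)) := by
  have hVeq : ∀ y > 0, V y = U (I y) - I y * y :=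
    fun y hy => conjugate_eq hU_conc hU_deriv hV hI_pos hI_left hy
  have hI_surj : SurjOn I (Ioi 0) (Ioi 0) := fun x hx =>
    ⟨U' x, hU_conc.pos_of_hasDerivAt_of_monotoneOn hU_incr.monotoneOn hx
      (lt_trans hx (lt_add_one x)) (lt_add_one x) (hU_deriv x hx), hI_right x hx⟩
  have hI_anti : StrictAntiOn I (Ioi 0) :=
    (hU_conc.strictAntiOn_of_hasDerivAt hU_deriv).strictAntiOn_of_leftInvOn hI_pos hI_left
  have hI_cont : ContinuousOn I (Ioi 0) := hI_anti.continuousOn_Ioi_of_surjOn hI_pos hI_surj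
  have hV_deriv : ∀ y ∈ Ioi (0 : ℝ), HasDerivAt V (-I y) y := fun y hy =>
    hasDerivAt_of_subgradient_of_continuousAt (Ioi_mem_nhds hy)
      (conjugate_subgradient hV hVeq hI_pos) (hI_cont.continuousAt (Ioi_mem_nhds hy)).neg
  have hV_anti : StrictAntiOn V (Ioi 0) :=
    strictAntiOn_of_hasDerivWithinAt_neg (convex_Ioi 0)
      (fun y hy => (hV_deriv y hy).continuousAt.continuousWithinAt)
      (by simpa using fun y hy => (hV_deriv y hy).hasDerivWithinAt) (by simpa using hI_pos)
  have hUe : MonotoneOn (fun x => (U x : EReal)) (Ioi 0) :=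
    EReal.coe_strictMono.monotone.comp_monotoneOn hU_incr.monotoneOn
  obtain ⟨x₀, hx₀, hUx₀⟩ := hU_pos
  refine ⟨hV_anti, hI_anti.neg.strictConvexOn_of_hasDerivAt isOpen_Ioi (convex_Ioi 0) hV_deriv,
    hV_deriv, hI_cont.neg,
    ⟨_, ?_, hUe.tendsto_atTop_sSup_image, tendsto_conjugate_nhdsGT_zero hV hVeq hI_pos⟩,
    ⟨_, ?_, hUe.tendsto_nhdsGT (OrderBot.bddBelow _),
      tendsto_conjugate_atTop hU_incr.monotoneOn hU_conc hU_deriv hV hVeq hI_pos hI_left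
        (hI_anti.tendsto_atTop_nhdsGT_of_surjOn hI_pos hI_surj)⟩⟩
  · exact (EReal.coe_pos.2 hUx₀).trans_le (le_sSup (mem_image_of_mem _ hx₀))
  · exact (sInf_le (mem_image_of_mem _ hx₀)).trans_lt (EReal.coe_lt_top _)

/-- The convex conjugate `V` of `U` is strictly decreasing, strictly convex and
continuously differentiable on `(0,∞)` with `V'(y) = −I(y)`; moreover
`lim_{y→0+} V(y) = lim_{x→∞} U(x)` (a value `L ∈ (0,∞]`) and
`lim_{y→∞} V(y) = lim_{x→0+} U(x)` (a value `M ∈ [−∞,∞)`). -/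
theorem convex_conjugate_properties
    (U U' V I : ℝ → ℝ)
    (hU_incr : StrictMonoOn U (Set.Ioi 0))
    (hU_conc : StrictConcaveOn ℝ (Set.Ioi 0) U)
    (hU_deriv : ∀ x ∈ Set.Ioi (0:ℝ), HasDerivAt U (U' x) x)
    (hU'_cont : ContinuousOn U' (Set.Ioi 0))
    (hInada_zero : Filter.Tendsto U' (nhdsWithin 0 (Set.Ioi 0)) Filter.atTop)
    (hInada_inf : Filter.Tendsto U' Filter.atTop (nhds 0))
    (hU_pos : ∃ x > 0, 0 < U x)
    (hV : ∀ y > 0, IsLUB {z : ℝ | ∃ x > 0, z = U x - x * y} (V y))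
    (hI_pos : ∀ y > 0, 0 < I y)
    (hI_left : ∀ y > 0, U' (I y) = y)
    (hI_right : ∀ x > 0, I (U' x) = x) :
    StrictAntiOn V (Set.Ioi 0) ∧
    StrictConvexOn ℝ (Set.Ioi 0) V ∧
    (∀ y ∈ Set.Ioi (0:ℝ), HasDerivAt V (-(I y)) y) ∧
    ContinuousOn (fun y => -(I y)) (Set.Ioi 0) ∧
    (∃ L : EReal, 0 < L ∧
      Filter.Tendsto (fun x => (U x : EReal)) Filter.atTop (nhds L) ∧
      Filter.Tendsto (fun y => (V y : EReal)) (nhdsWithin 0 (Set.Ioi 0)) (nhds L)) ∧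
    (∃ M : EReal, M < ⊤ ∧
      Filter.Tendsto (fun x => (U x : EReal)) (nhdsWithin 0 (Set.Ioi 0)) (nhds M) ∧
      Filter.Tendsto (fun y => (V y : EReal)) Filter.atTop (nhds M)) :=
  convex_conjugate_properties_general U U' V I hU_incr hU_conc hU_deriv hU_pos hV hI_pos hI_left
    hI_right
end

section
/- Suppose AE(U) < 1. Let g : Ω → [0,∞) be integrable with E[|V(z·g)|] < ∞ for every z > 0. Then for every y > 0 the function φ(z) := E[V(z·g)] is differentiable at y, with finite derivative φ'(y) = −E[g·I(y·g)], where g·I(y·g) is interpreted as 0 on the set {g = 0}. -/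
open Filter Set Topology MeasureTheory
open scoped ENNReal NNReal

/-!
The conjugate `V` is convex with subgradient `-I p` at every `p > 0`: the supremum defining
`V q` is at least `U (I p) - I p * q`, while the tangent line of `U` at `I p` shows that
`V p = U (I p) - I p * p`. As the inverse of the decreasing bijection `U'` of `(0, ∞)`, `I` is
continuous, so `V' = -I`. For `z > y / 2`, the map `z ↦ V (z * g)` is then Lipschitz with constant
`g * I (y / 2 * g)`, and the subgradient inequality between `y / 4 * g` and `y / 2 * g` bounds this
constant by `4 / y * (V (y / 4 * g) - V (y / 2 * g))`, which is integrable by assumption. Hence one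
may differentiate under the integral sign.
-/

theorem ConcaveOn.le_add_mul_sub_of_hasDerivAt {S : Set ℝ} {f : ℝ → ℝ} {f' x y : ℝ}
    (hf : ConcaveOn ℝ S f) (hx : x ∈ S) (hy : y ∈ S) (hfx : HasDerivAt f f' x) :
    f y ≤ f x + f' * (y - x) := by
  rcases lt_trichotomy y x with h | rfl | h
  · have := hf.le_slope_of_hasDerivAt hy hx h hfx
    rw [slope_def_field, le_div_iff₀ (sub_pos.2 h)] at this
    linarith
  · simp
  · have := hf.slope_le_of_hasDerivAt hx hy h hfx
    rw [slope_def_field, div_le_iff₀ (sub_pos.2 h)] at this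
    linarith

theorem StrictAntiOn.lt_of_tendsto_atTop {f : ℝ → ℝ} {a x : ℝ} (hf : StrictAntiOn f (Ici x))
    (h : Tendsto f atTop (𝓝 a)) : a < f x := by
  have hx1 : x + 1 ∈ Ici x := by simp
  have : a ≤ f (x + 1) := le_of_tendsto h <| (eventually_ge_atTop (x + 1)).mono fun t ht =>
    hf.antitoneOn hx1 (by simp only [mem_Ici] at *; linarith) ht
  exact this.trans_lt (hf self_mem_Ici hx1 (by linarith))

theorem EReal.enorm_toReal_le_abs (x : EReal) : ‖x.toReal‖ₑ ≤ x.abs := by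
  induction x using EReal.rec with
  | bot => simp
  | coe r => rw [EReal.toReal_coe, EReal.abs_def, Real.enorm_eq_ofReal_abs]
  | top => simp

theorem integrable_toReal_of_lintegral_abs_ne_top {Ω : Type*} [MeasurableSpace Ω] {P : Measure Ω}
    {X : Ω → EReal} (hX : AEStronglyMeasurable (fun ω => (X ω).toReal) P)
    (h : ∫⁻ ω, (X ω).abs ∂P ≠ ⊤) : Integrable (fun ω => (X ω).toReal) P :=
  ⟨hX, (lintegral_mono fun ω => EReal.enorm_toReal_le_abs (X ω)).trans_lt h.lt_top⟩

theorem measurable_ite_eq_zero {Ω : Type*} [MeasurableSpace Ω] {f : ℝ → ℝ} {g : Ω → ℝ}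
    (hf : ContinuousOn f (Ioi 0)) (hg : Measurable g) (hg0 : ∀ ω, 0 ≤ g ω) (c : ℝ) :
    Measurable fun ω => if g ω = 0 then c else f (g ω) := by
  have : (fun ω => if g ω = 0 then c else f (g ω)) = (Ioi 0).piecewise f (fun _ => c) ∘ g := by
    ext ω
    simp [piecewise, (hg0 ω).lt_iff_ne', ite_not]
  rw [this]
  exact (hf.measurable_piecewise continuousOn_const measurableSet_Ioi).comp hg

def HasSubgradientOn (V D : ℝ → ℝ) (s : Set ℝ) : Prop :=
  ∀ p ∈ s, ∀ q ∈ s, V p + D p * (q - p) ≤ V q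

namespace HasSubgradientOn

variable {V D : ℝ → ℝ} {s t : Set ℝ}

theorem mono (h : HasSubgradientOn V D s) (hts : t ⊆ s) : HasSubgradientOn V D t :=
  fun p hp q hq => h p (hts hp) q (hts hq)

theorem comp_mul_const (h : HasSubgradientOn V D s) (x : ℝ) :
    HasSubgradientOn (fun z => V (z * x)) (fun z => D (z * x) * x) ((· * x) ⁻¹' s) :=
  fun p hp q hq => by convert h _ hp _ hq using 2; ring

theorem monotoneOn (h : HasSubgradientOn V D s) : MonotoneOn D s := by
  intro p hp q hq hpq
  rcases hpq.eq_or_lt with rfl | hpq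
  · rfl
  · nlinarith [h p hp q hq, h q hq p hp]

theorem antitoneOn_of_neg {I : ℝ → ℝ} (h : HasSubgradientOn V (-I) s) : AntitoneOn I s :=
  fun _ hp _ hq hpq => neg_le_neg_iff.1 (h.monotoneOn hp hq hpq)

theorem lipschitzOnWith {K : ℝ≥0} (h : HasSubgradientOn V D s) (hK : ∀ p ∈ s, |D p| ≤ K) :
    LipschitzOnWith K V s :=
  LipschitzOnWith.of_le_add_mul K fun p hp q hq =>
    calc V p ≤ V q + -D p * (q - p) := by linarith [h p hp q hq]
      _ ≤ V q + |D p| * |q - p| := by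
        rw [← abs_mul, ← abs_neg, ← neg_mul]
        linarith [le_abs_self (-D p * (q - p))]
      _ ≤ V q + K * dist p q := by
        rw [Real.dist_eq, abs_sub_comm]
        gcongr
        exact hK p hp

theorem hasDerivAt {x : ℝ} (h : HasSubgradientOn V D s) (hs : s ∈ 𝓝 x)
    (hD : ContinuousAt D x) : HasDerivAt V (D x) x := by
  rw [hasDerivAt_iff_isLittleO, Asymptotics.isLittleO_iff]
  intro c hc
  filter_upwards [hs, hD.eventually (Metric.ball_mem_nhds _ hc)] with u hu hDu
  have hx := mem_of_mem_nhds hs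
  have hlow : 0 ≤ V u - V x - (u - x) * D x := by linarith [h x hx u hu]
  have hupp : V u - V x - (u - x) * D x ≤ (D u - D x) * (u - x) := by linarith [h u hu x hx]
  rw [smul_eq_mul, Real.norm_eq_abs, Real.norm_eq_abs, abs_of_nonneg hlow]
  calc V u - V x - (u - x) * D x ≤ (D u - D x) * (u - x) := hupp
    _ ≤ |D u - D x| * |u - x| := by rw [← abs_mul]; exact le_abs_self _
    _ ≤ c * |u - x| := by gcongr; exact (Metric.mem_ball.1 hDu).le

end HasSubgradientOn

theorem AntitoneOn.continuousOn_of_surjOn_Ioi {f : ℝ → ℝ} (hf : AntitoneOn f (Ioi 0))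
    (hmaps : MapsTo f (Ioi 0) (Ioi 0)) (hsurj : SurjOn f (Ioi 0) (Ioi 0)) :
    ContinuousOn f (Ioi 0) := by
  intro t ht
  have hneg : ContinuousAt (-f) t := by
    refine continuousAt_of_monotoneOn_of_image_mem_nhds
      (fun p hp q hq hpq => neg_le_neg (hf hp hq hpq)) (Ioi_mem_nhds ht)
      (mem_of_superset (Iio_mem_nhds (neg_neg_of_pos (hmaps ht))) ?_)
    intro w hw
    obtain ⟨x, hx, hfx⟩ := hsurj (mem_Ioi.2 (neg_pos.2 hw))
    exact ⟨x, hx, by simp [hfx]⟩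
  simpa using hneg.neg.continuousWithinAt (s := Ioi 0)

section Conjugate

variable {U U' V I : ℝ → ℝ}

theorem conjugate_eq_of_hasDerivAt (hU : ConcaveOn ℝ (Ioi 0) U)
    (hU' : ∀ x ∈ Ioi (0 : ℝ), HasDerivAt U (U' x) x) {y : ℝ}
    (hV : IsLUB {z : ℝ | ∃ x > 0, z = U x - x * y} (V y)) (hIy : 0 < I y) (hUI : U' (I y) = y) :
    V y = U (I y) - I y * y := by
  refine le_antisymm (hV.2 ?_) (hV.1 ⟨I y, hIy, rfl⟩)
  rintro _ ⟨x, hx, rfl⟩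
  have := hU.le_add_mul_sub_of_hasDerivAt hIy hx (hU' _ hIy)
  rw [hUI] at this
  linarith

theorem conjugate_hasSubgradientOn (hU : ConcaveOn ℝ (Ioi 0) U)
    (hU' : ∀ x ∈ Ioi (0 : ℝ), HasDerivAt U (U' x) x)
    (hV : ∀ y > 0, IsLUB {z : ℝ | ∃ x > 0, z = U x - x * y} (V y))
    (hI_pos : ∀ y > 0, 0 < I y) (hI_left : ∀ y > 0, U' (I y) = y) :
    HasSubgradientOn V (-I) (Ioi 0) := by
  intro p hp q hq
  have hVp := conjugate_eq_of_hasDerivAt hU hU' (hV p hp) (hI_pos p hp) (hI_left p hp)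
  have hVq := (hV q hq).1 ⟨I p, hI_pos p hp, rfl⟩
  rw [Pi.neg_apply, hVp]
  linarith

end Conjugate

section DualIntegral

variable {V I : ℝ → ℝ}

theorem hasDerivAt_ite_comp_mul (hsub : HasSubgradientOn V (-I) (Ioi 0))
    (hI : ContinuousOn I (Ioi 0)) (V0 : EReal) {x y : ℝ} (hx : 0 ≤ x) (hy : 0 < y) :
    HasDerivAt (fun z => (if x = 0 then V0 else (V (z * x) : EReal)).toReal)
      (-(if x = 0 then 0 else x * I (y * x))) y := by
  rcases hx.eq_or_lt with rfl | hx
  · simpa using hasDerivAt_const y V0.toReal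
  · have hyx : 0 < y * x := mul_pos hy hx
    have hV := hsub.hasDerivAt (Ioi_mem_nhds hyx) (hI.continuousAt (Ioi_mem_nhds hyx)).neg
    simp only [hx.ne', if_false, EReal.toReal_coe]
    exact (hV.comp y (hasDerivAt_mul_const x)).congr_deriv (by rw [Pi.neg_apply]; ring)

theorem lipschitzOnWith_ite_comp_mul (hsub : HasSubgradientOn V (-I) (Ioi 0))
    (hI : ∀ t > 0, 0 ≤ I t) (V0 : EReal) {x y : ℝ} (hx : 0 ≤ x) (hy : 0 < y) :
    LipschitzOnWith (Real.nnabs (if x = 0 then 0 else x * I (y / 2 * x)))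
      (fun z => (if x = 0 then V0 else (V (z * x) : EReal)).toReal) (Ioi (y / 2)) := by
  rcases hx.eq_or_lt with rfl | hx
  · simp [(LipschitzWith.const V0.toReal).lipschitzOnWith]
  · simp only [hx.ne', if_false, EReal.toReal_coe]
    have hsub' := (hsub.comp_mul_const x).mono fun z (hz : y / 2 < z) =>
      show 0 < z * x from mul_pos (by linarith) hx
    refine hsub'.lipschitzOnWith fun z (hz : y / 2 < z) => ?_
    have hyx : 0 < y / 2 * x := by positivity
    have hzx : y / 2 * x ≤ z * x := by gcongr
    have hanti : I (z * x) ≤ I (y / 2 * x) :=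
      hsub.antitoneOn_of_neg hyx (hyx.trans_le hzx) hzx
    rw [Real.coe_nnabs, Pi.neg_apply, abs_mul, abs_neg, abs_of_pos hx,
      abs_of_nonneg (hI _ (hyx.trans_le hzx)), abs_of_nonneg (mul_nonneg hx.le (hI _ hyx)),
      mul_comm x]
    exact mul_le_mul_of_nonneg_right hanti hx.le

theorem norm_ite_mul_le_sub (hsub : HasSubgradientOn V (-I) (Ioi 0)) (hI : ∀ t > 0, 0 ≤ I t)
    (V0 : EReal) {x y : ℝ} (hx : 0 ≤ x) (hy : 0 < y) :
    ‖if x = 0 then 0 else x * I (y / 2 * x)‖ ≤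
      4 / y * ((if x = 0 then V0 else (V (y / 4 * x) : EReal)).toReal -
        (if x = 0 then V0 else (V (y / 2 * x) : EReal)).toReal) := by
  rcases hx.eq_or_lt with rfl | hx
  · simp
  · simp only [hx.ne', if_false, EReal.toReal_coe]
    have hyx : 0 < y / 2 * x := by positivity
    have hsg := hsub (y / 2 * x) hyx (y / 4 * x) (by simp only [mem_Ioi]; positivity)
    rw [Pi.neg_apply] at hsg
    rw [Real.norm_eq_abs, abs_of_nonneg (mul_nonneg hx.le (hI _ hyx))]
    calc x * I (y / 2 * x) = 4 / y * (-I (y / 2 * x) * (y / 4 * x - y / 2 * x)) := by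
          field_simp; ring
      _ ≤ 4 / y * (V (y / 4 * x) - V (y / 2 * x)) := by gcongr; linarith

theorem hasDerivAt_integral_ite_comp_mul {Ω : Type*} [MeasurableSpace Ω] {P : Measure Ω}
    (hsub : HasSubgradientOn V (-I) (Ioi 0)) (hI_nonneg : ∀ t > 0, 0 ≤ I t)
    (hI_cont : ContinuousOn I (Ioi 0)) {g : Ω → ℝ} (hg_meas : Measurable g)
    (hg_nonneg : ∀ ω, 0 ≤ g ω) (V0 : EReal)
    (hVg : ∀ z : ℝ, 0 < z →
      ∫⁻ ω, (if g ω = 0 then V0 else (V (z * g ω) : EReal)).abs ∂P ≠ ⊤)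
    {y : ℝ} (hy : 0 < y) :
    Integrable (fun ω => if g ω = 0 then 0 else g ω * I (y * g ω)) P ∧
      HasDerivAt
        (fun z => ∫ ω, (if g ω = 0 then V0 else (V (z * g ω) : EReal)).toReal ∂P)
        (-(∫ ω, (if g ω = 0 then 0 else g ω * I (y * g ω)) ∂P)) y := by
  have hV_cont : ContinuousOn V (Ioi 0) := fun t ht =>
    (hsub.hasDerivAt (Ioi_mem_nhds ht)
      (hI_cont.continuousAt (Ioi_mem_nhds ht)).neg).continuousAt.continuousWithinAt
  have hF_meas : ∀ z > 0, Measurable fun ω =>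
      (if g ω = 0 then V0 else (V (z * g ω) : EReal)).toReal := fun z hz => by
    simp only [apply_ite EReal.toReal, EReal.toReal_coe]
    exact measurable_ite_eq_zero (hV_cont.comp (continuousOn_const.mul continuousOn_id)
      fun x hx => mul_pos hz hx) hg_meas hg_nonneg _
  have hF_int : ∀ z > 0, Integrable (fun ω =>
      (if g ω = 0 then V0 else (V (z * g ω) : EReal)).toReal) P := fun z hz =>
    integrable_toReal_of_lintegral_abs_ne_top (hF_meas z hz).aestronglyMeasurable (hVg z hz)
  have hF'_meas : ∀ z > 0, Measurable fun ω => if g ω = 0 then 0 else g ω * I (z * g ω) :=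
    fun z hz => measurable_ite_eq_zero (continuousOn_id.mul (hI_cont.comp
      (continuousOn_const.mul continuousOn_id) fun x hx => mul_pos hz hx)) hg_meas hg_nonneg _
  have hbound_int : Integrable (fun ω => if g ω = 0 then 0 else g ω * I (y / 2 * g ω)) P :=
    (((hF_int _ (by positivity)).sub (hF_int _ (by positivity))).const_mul (4 / y)).mono'
      (hF'_meas _ (by positivity)).aestronglyMeasurable (Eventually.of_forall fun ω =>
        norm_ite_mul_le_sub hsub hI_nonneg V0 (hg_nonneg ω) hy)
  obtain ⟨hint, hderiv⟩ := hasDerivAt_integral_of_dominated_loc_of_lip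
    (Ioi_mem_nhds (half_lt_self hy))
    ((eventually_gt_nhds hy).mono fun z hz => (hF_meas z hz).aestronglyMeasurable)
    (hF_int y hy) (hF'_meas y hy).neg.aestronglyMeasurable
    (Eventually.of_forall fun ω =>
      lipschitzOnWith_ite_comp_mul hsub hI_nonneg V0 (hg_nonneg ω) hy) hbound_int
    (Eventually.of_forall fun ω => hasDerivAt_ite_comp_mul hsub hI_cont V0 (hg_nonneg ω) hy)
  exact ⟨by simpa using hint.neg, by simpa [integral_neg] using hderiv⟩

end DualIntegral

theorem dual_expectation_differentiable_general
    {Ω : Type*} [MeasurableSpace Ω] (P : Measure Ω)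
    (U U' V I : ℝ → ℝ)
    (hU_conc : StrictConcaveOn ℝ (Set.Ioi 0) U)
    (hU_deriv : ∀ x ∈ Set.Ioi (0:ℝ), HasDerivAt U (U' x) x)
    (hInada_inf : Filter.Tendsto U' Filter.atTop (nhds 0))
    (hV : ∀ y > 0, IsLUB {z : ℝ | ∃ x > 0, z = U x - x * y} (V y))
    (hI_pos : ∀ y > 0, 0 < I y)
    (hI_left : ∀ y > 0, U' (I y) = y)
    (hI_right : ∀ x > 0, I (U' x) = x)
    (V0 : EReal)
    (g : Ω → ℝ) (hg_meas : Measurable g) (hg_nonneg : ∀ ω, 0 ≤ g ω)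
    (hVg : ∀ z : ℝ, 0 < z →
      ∫⁻ ω, (if g ω = 0 then V0 else (V (z * g ω) : EReal)).abs ∂P ≠ ⊤) :
    ∀ y : ℝ, 0 < y →
      Integrable (fun ω => if g ω = 0 then 0 else g ω * I (y * g ω)) P ∧
      HasDerivAt
        (fun z => ∫ ω, (if g ω = 0 then V0 else (V (z * g ω) : EReal)).toReal ∂P)
        (-(∫ ω, (if g ω = 0 then 0 else g ω * I (y * g ω)) ∂P)) y := by
  intro y hy
  have hU'_anti : StrictAntiOn U' (Ioi 0) := fun a ha b hb hab => by
    simpa only [(hU_deriv a ha).deriv, (hU_deriv b hb).deriv] using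
      hU_conc.strictAntiOn_deriv (fun x hx => (hU_deriv x hx).differentiableAt) ha hb hab
  have hU'_pos : ∀ x > 0, 0 < U' x := fun x hx =>
    (hU'_anti.mono (Ici_subset_Ioi.2 hx)).lt_of_tendsto_atTop hInada_inf
  have hsub := conjugate_hasSubgradientOn hU_conc.concaveOn hU_deriv hV hI_pos hI_left
  have hI_cont : ContinuousOn I (Ioi 0) :=
    hsub.antitoneOn_of_neg.continuousOn_of_surjOn_Ioi (fun t ht => hI_pos t ht)
      fun x hx => ⟨U' x, hU'_pos x hx, hI_right x hx⟩
  exact hasDerivAt_integral_ite_comp_mul hsub (fun t ht => (hI_pos t ht).le) hI_cont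
    hg_meas hg_nonneg V0 hVg hy

/-- Under `AE(U) < 1`, if `g : Ω → [0,∞)` is integrable with `E[|V(z·g)|] < ∞`
for every `z > 0` (with `V(0) := U(∞) =: V0` on `{g = 0}`), then for every `y > 0` the map
`φ(z) := E[V(z·g)]` is differentiable at `y` with finite derivative
`φ'(y) = −E[g·I(y·g)]`, where `g·I(y·g)` is interpreted as `0` on `{g = 0}`. -/
theorem dual_expectation_differentiable
    {Ω : Type*} [MeasurableSpace Ω] (P : Measure Ω) [IsProbabilityMeasure P]
    (U U' V I : ℝ → ℝ)
    (hU_incr : StrictMonoOn U (Set.Ioi 0))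
    (hU_conc : StrictConcaveOn ℝ (Set.Ioi 0) U)
    (hU_deriv : ∀ x ∈ Set.Ioi (0:ℝ), HasDerivAt U (U' x) x)
    (hU'_cont : ContinuousOn U' (Set.Ioi 0))
    (hInada_zero : Filter.Tendsto U' (nhdsWithin 0 (Set.Ioi 0)) Filter.atTop)
    (hInada_inf : Filter.Tendsto U' Filter.atTop (nhds 0))
    (hU_pos : ∃ x > 0, 0 < U x)
    (hV : ∀ y > 0, IsLUB {z : ℝ | ∃ x > 0, z = U x - x * y} (V y))
    (hI_pos : ∀ y > 0, 0 < I y)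
    (hI_left : ∀ y > 0, U' (I y) = y)
    (hI_right : ∀ x > 0, I (U' x) = x)
    (hAE : Filter.limsup (fun x => x * U' x / U x) Filter.atTop < 1)
    (V0 : EReal) (hV0 : Filter.Tendsto (fun x => (U x : EReal)) Filter.atTop (nhds V0))
    (g : Ω → ℝ) (hg_meas : Measurable g) (hg_nonneg : ∀ ω, 0 ≤ g ω)
    (hg_int : Integrable g P)
    (hVg : ∀ z : ℝ, 0 < z →
      ∫⁻ ω, (if g ω = 0 then V0 else (V (z * g ω) : EReal)).abs ∂P ≠ ⊤) :
    ∀ y : ℝ, 0 < y →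
      Integrable (fun ω => if g ω = 0 then 0 else g ω * I (y * g ω)) P ∧
      HasDerivAt
        (fun z => ∫ ω, (if g ω = 0 then V0 else (V (z * g ω) : EReal)).toReal ∂P)
        (-(∫ ω, (if g ω = 0 then 0 else g ω * I (y * g ω)) ∂P)) y :=
  dual_expectation_differentiable_general P U U' V I hU_conc hU_deriv hInada_inf hV hI_pos hI_left
    hI_right V0 g hg_meas hg_nonneg hVg
end
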